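/- arXiv:0901.3506 — 2 statements merged into one kernel-verified Lean document; each statement's English description precedes it below -/
import Mathlib

section
/- Let A, B, C be Banach algebras and let T₁ : A → B and T₂ : B → C be bounded wcf-homomorphisms. Then the composite T₂ ∘ T₁ : A → C is a bounded wcf-homomorphism. -/
open Metric

/-- `T` is a wcf-homomorphism: its failure of multiplicativity
`S_T(a,b) = T a * T b - T (a*b)` is a weakly compact bilinear map, i.e. the closure, in the
weak topology of the codomain, of the image of the product of the open unit balls under `S_T`
is weakly compact. -/
def IsWcfHomomorphism {A B : Type*}
    [NonUnitalNormedRing A] [NormedSpace ℂ A]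
    [NonUnitalNormedRing B] [NormedSpace ℂ B]
    (T : A →L[ℂ] B) : Prop :=
  IsCompact (closure ((toWeakSpace ℂ B) ''
    (Set.image2 (fun a b => T a * T b - T (a * b)) (ball (0 : A) 1) (ball (0 : A) 1))))

/-!
`S_{T₂ ∘ T₁}(a, b) = S_{T₂}(T₁ a, T₁ b) + T₂ (S_{T₁}(a, b))`. If `T₁` maps the unit ball into
`c • ball 0 1`, the first term lies in `c² • K₂` by bilinearity of `S_{T₂}` and the second in
`T₂ '' K₁`, where `Kᵢ` is the weak closure of the image of `S_{Tᵢ}` on the unit balls. Both sets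
are weakly compact (`T₂` is weak-to-weak continuous), hence so is their sum.
-/

open Set Pointwise

theorem ContinuousLinearMap.exists_mapsTo_smul_unitBall {𝕜 E F : Type*}
    [NontriviallyNormedField 𝕜] [SeminormedAddCommGroup E] [NormedSpace 𝕜 E]
    [SeminormedAddCommGroup F] [NormedSpace 𝕜 F] (T : E →L[𝕜] F) :
    ∃ c : 𝕜, MapsTo T (ball 0 1) (c • ball 0 1) := by
  obtain ⟨c, hc⟩ := NormedField.exists_lt_norm 𝕜 ‖T‖
  have hc₀ : c ≠ 0 := norm_pos_iff.mp ((norm_nonneg T).trans_lt hc)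
  refine ⟨c, fun x hx => ?_⟩
  rw [smul_unitBall hc₀, mem_ball_zero_iff]
  calc ‖T x‖ ≤ ‖T‖ * ‖x‖ := T.le_opNorm x
    _ ≤ ‖T‖ := mul_le_of_le_one_right (norm_nonneg T) (mem_ball_zero_iff.mp hx).le
    _ < ‖c‖ := hc

namespace ContinuousLinearMap

variable {A B C : Type*} [NonUnitalNormedRing A] [NormedSpace ℂ A]
  [NonUnitalNormedRing B] [NormedSpace ℂ B] [NonUnitalNormedRing C] [NormedSpace ℂ C]

def mulDefect (T : A →L[ℂ] B) (a b : A) : B := T a * T b - T (a * b)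

theorem mulDefect_comp (T₁ : A →L[ℂ] B) (T₂ : B →L[ℂ] C) (a b : A) :
    mulDefect (T₂.comp T₁) a b = mulDefect T₂ (T₁ a) (T₁ b) + T₂ (mulDefect T₁ a b) := by
  simp only [mulDefect, comp_apply, map_sub]
  abel

theorem mulDefect_smul_smul [IsScalarTower ℂ A A] [SMulCommClass ℂ A A]
    [IsScalarTower ℂ B B] [SMulCommClass ℂ B B] (T : A →L[ℂ] B) (c : ℂ) (a b : A) :
    mulDefect T (c • a) (c • b) = c ^ 2 • mulDefect T a b := by
  simp only [mulDefect, map_smul, smul_mul_smul_comm, smul_sub, sq]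

def weakMulDefectHull (T : A →L[ℂ] B) : Set (WeakSpace ℂ B) :=
  closure (toWeakSpace ℂ B '' image2 (mulDefect T) (ball 0 1) (ball 0 1))

theorem toWeakSpace_mulDefect_mem_weakMulDefectHull (T : A →L[ℂ] B) {a b : A}
    (ha : a ∈ ball 0 1) (hb : b ∈ ball 0 1) :
    toWeakSpace ℂ B (mulDefect T a b) ∈ weakMulDefectHull T :=
  subset_closure (mem_image_of_mem _ (mem_image2_of_mem ha hb))

theorem toWeakSpace_mulDefect_mem_smul_weakMulDefectHull [IsScalarTower ℂ A A]
    [SMulCommClass ℂ A A] [IsScalarTower ℂ B B] [SMulCommClass ℂ B B] (T : A →L[ℂ] B) {c : ℂ}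
    {a b : A} (ha : a ∈ c • ball 0 1) (hb : b ∈ c • ball 0 1) :
    toWeakSpace ℂ B (mulDefect T a b) ∈ c ^ 2 • weakMulDefectHull T := by
  obtain ⟨a, ha, rfl⟩ := ha
  obtain ⟨b, hb, rfl⟩ := hb
  rw [mulDefect_smul_smul, map_smul]
  exact smul_mem_smul_set (toWeakSpace_mulDefect_mem_weakMulDefectHull T ha hb)

end ContinuousLinearMap

open ContinuousLinearMap in
theorem isWcfHomomorphism_comp_general {A B C : Type*}
    [NonUnitalNormedRing A] [NormedSpace ℂ A]
    [NonUnitalNormedRing B] [NormedSpace ℂ B] [IsScalarTower ℂ B B] [SMulCommClass ℂ B B]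
    [NonUnitalNormedRing C] [NormedSpace ℂ C] [IsScalarTower ℂ C C] [SMulCommClass ℂ C C]
    (T₁ : A →L[ℂ] B) (T₂ : B →L[ℂ] C)
    (h₁ : IsWcfHomomorphism T₁) (h₂ : IsWcfHomomorphism T₂) :
    IsWcfHomomorphism (T₂.comp T₁) := by
  obtain ⟨c, hT₁⟩ := T₁.exists_mapsTo_smul_unitBall
  have hK₁ : IsCompact (weakMulDefectHull T₁) := h₁
  have hK₂ : IsCompact (weakMulDefectHull T₂) := h₂
  refine ((hK₂.smul (c ^ 2)).add (hK₁.image (WeakSpace.map T₂).continuous)).closure_of_subset ?_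
  rintro _ ⟨_, ⟨a, ha, b, hb, rfl⟩, rfl⟩
  change toWeakSpace ℂ C (mulDefect (T₂.comp T₁) a b) ∈ _
  rw [mulDefect_comp, map_add]
  exact add_mem_add (toWeakSpace_mulDefect_mem_smul_weakMulDefectHull T₂ (hT₁ ha) (hT₁ hb))
    (mem_image_of_mem _ (toWeakSpace_mulDefect_mem_weakMulDefectHull T₁ ha hb))

/-- the composite of two bounded wcf-homomorphisms between Banach algebras is a
bounded wcf-homomorphism. -/
theorem isWcfHomomorphism_comp {A B C : Type*}
    [NonUnitalNormedRing A] [NormedSpace ℂ A] [IsScalarTower ℂ A A] [SMulCommClass ℂ A A]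
    [CompleteSpace A]
    [NonUnitalNormedRing B] [NormedSpace ℂ B] [IsScalarTower ℂ B B] [SMulCommClass ℂ B B]
    [CompleteSpace B]
    [NonUnitalNormedRing C] [NormedSpace ℂ C] [IsScalarTower ℂ C C] [SMulCommClass ℂ C C]
    [CompleteSpace C]
    (T₁ : A →L[ℂ] B) (T₂ : B →L[ℂ] C)
    (h₁ : IsWcfHomomorphism T₁) (h₂ : IsWcfHomomorphism T₂) :
    IsWcfHomomorphism (T₂.comp T₁) :=
  isWcfHomomorphism_comp_general T₁ T₂ h₁ h₂
end

section
/- Let A and B be Banach algebras and let T : A → B be a bijective bounded wcf-homomorphism. Then the inverse map T⁻¹ : B → A is a bounded linear map and is a wcf-homomorphism. -/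
open Metric

/-!
With `T' = T⁻¹` and `a = T' x`, `b = T' y` one has `S_{T'}(x, y) = -T' (S_T(a, b))`. Rescaling
`a, b` by `c⁻¹` with `‖c‖ > ‖T'‖` moves them into the unit ball at the cost of a factor `c²`, so
the image of the unit balls under `S_{T'}` lies in the image of the unit balls under `S_T` by
the bounded operator `-c² T'`. Bounded operators are weakly continuous, hence preserve relative
weak compactness. Boundedness of `T'` is the open mapping theorem.
-/

section RelativelyWeaklyCompact

variable {𝕜 E F : Type*} [CommRing 𝕜] [TopologicalSpace 𝕜] [ContinuousConstSMul 𝕜 𝕜]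
  [AddCommGroup E] [Module 𝕜 E] [TopologicalSpace E]

variable (𝕜) in
def IsRelativelyWeaklyCompact [ContinuousAdd 𝕜] (s : Set E) : Prop :=
  IsCompact (closure (toWeakSpace 𝕜 E '' s))

theorem IsRelativelyWeaklyCompact.mono [ContinuousAdd 𝕜] {s t : Set E}
    (hs : IsRelativelyWeaklyCompact 𝕜 s) (hts : t ⊆ s) : IsRelativelyWeaklyCompact 𝕜 t :=
  hs.of_isClosed_subset isClosed_closure (closure_mono (Set.image_mono hts))

theorem IsRelativelyWeaklyCompact.image [IsTopologicalAddGroup 𝕜] [AddCommGroup F] [Module 𝕜 F]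
    [TopologicalSpace F] {s : Set E} (hs : IsRelativelyWeaklyCompact 𝕜 s)
    (L : E →L[𝕜] F) : IsRelativelyWeaklyCompact 𝕜 (L '' s) := by
  have hmap :
      toWeakSpace 𝕜 F '' (L '' s) ⊆ WeakSpace.map L '' closure (toWeakSpace 𝕜 E '' s) := by
    rintro - ⟨-, ⟨x, hx, rfl⟩, rfl⟩
    exact ⟨toWeakSpace 𝕜 E x, subset_closure ⟨x, hx, rfl⟩, rfl⟩
  exact (IsCompact.image hs (WeakSpace.map L).continuous).closure.of_isClosed_subset
    isClosed_closure (closure_mono hmap)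

end RelativelyWeaklyCompact

section MulDefect

variable {𝕜 A B : Type*} [NonUnitalRing A] [NonUnitalRing B]

def mulDefect (f : A → B) (a b : A) : B :=
  f a * f b - f (a * b)

theorem mulDefect_smul_smul [Semiring 𝕜] [Module 𝕜 A] [Module 𝕜 B]
    [IsScalarTower 𝕜 A A] [SMulCommClass 𝕜 A A] [IsScalarTower 𝕜 B B] [SMulCommClass 𝕜 B B]
    {F : Type*} [FunLike F A B] [LinearMapClass F 𝕜 A B] (f : F) (c : 𝕜) (a b : A) :
    mulDefect f (c • a) (c • b) = (c * c) • mulDefect f a b := by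
  simp only [mulDefect, map_smul, smul_mul_assoc, mul_smul_comm, smul_smul, smul_sub]

theorem mulDefect_of_leftInverse {G : Type*} [FunLike G B A] [AddMonoidHomClass G B A]
    (f : A → B) (g : G) (hfg : Function.LeftInverse f g) (hgf : Function.LeftInverse g f)
    (x y : B) : mulDefect g x y = -g (mulDefect f (g x) (g y)) := by
  simp only [mulDefect, hfg x, hfg y, map_sub, hgf (g x * g y), neg_sub]

theorem mulDefect_of_leftInverse_eq_smul [Field 𝕜] [Module 𝕜 A] [Module 𝕜 B]
    [IsScalarTower 𝕜 A A] [SMulCommClass 𝕜 A A] [IsScalarTower 𝕜 B B] [SMulCommClass 𝕜 B B]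
    {F G : Type*} [FunLike F A B] [LinearMapClass F 𝕜 A B] [FunLike G B A]
    [LinearMapClass G 𝕜 B A] (f : F) (g : G)
    (hfg : Function.LeftInverse f g) (hgf : Function.LeftInverse g f) {c : 𝕜} (hc : c ≠ 0)
    (x y : B) : mulDefect g x y = -(c * c) • g (mulDefect f (c⁻¹ • g x) (c⁻¹ • g y)) := by
  rw [mulDefect_of_leftInverse f g hfg hgf, mulDefect_smul_smul, map_smul, smul_smul,
    show -(c * c) * (c⁻¹ * c⁻¹) = -1 by field_simp, neg_one_smul]

end MulDefect

theorem isWcfHomomorphism_iff {A B : Type*} [NonUnitalNormedRing A] [NormedSpace ℂ A]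
    [NonUnitalNormedRing B] [NormedSpace ℂ B] (T : A →L[ℂ] B) :
    IsWcfHomomorphism T ↔
      IsRelativelyWeaklyCompact ℂ (Set.image2 (mulDefect T) (ball (0 : A) 1) (ball (0 : A) 1)) :=
  Iff.rfl

theorem ContinuousLinearMap.inv_smul_apply_mem_ball_one {𝕜 E F : Type*}
    [NontriviallyNormedField 𝕜] [SeminormedAddCommGroup E] [NormedSpace 𝕜 E]
    [SeminormedAddCommGroup F] [NormedSpace 𝕜 F]
    (L : E →L[𝕜] F) {c : 𝕜} (hc : ‖L‖ < ‖c‖) {x : E} (hx : x ∈ ball (0 : E) 1) :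
    c⁻¹ • L x ∈ ball (0 : F) 1 := by
  rw [mem_ball_zero_iff] at hx ⊢
  have hc0 : 0 < ‖c‖ := (norm_nonneg L).trans_lt hc
  rw [norm_smul, norm_inv, inv_mul_lt_one₀ hc0]
  calc ‖L x‖ ≤ ‖L‖ * ‖x‖ := L.le_opNorm x
    _ ≤ ‖L‖ := mul_le_of_le_one_right (norm_nonneg L) hx.le
    _ < ‖c‖ := hc

/-- the inverse of a bijective bounded wcf-homomorphism between Banach algebras
is a bounded linear map and a wcf-homomorphism. -/
theorem isWcfHomomorphism_inverse {A B : Type*}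
    [NonUnitalNormedRing A] [NormedSpace ℂ A] [IsScalarTower ℂ A A] [SMulCommClass ℂ A A]
    [CompleteSpace A]
    [NonUnitalNormedRing B] [NormedSpace ℂ B] [IsScalarTower ℂ B B] [SMulCommClass ℂ B B]
    [CompleteSpace B]
    (T : A →L[ℂ] B) (hbij : Function.Bijective T) (hT : IsWcfHomomorphism T) :
    ∃ T' : B →L[ℂ] A,
      (∀ a : A, T' (T a) = a) ∧ (∀ b : B, T (T' b) = b) ∧ IsWcfHomomorphism T' := by
  let e : A ≃L[ℂ] B :=
    .ofBijective T (LinearMap.ker_eq_bot.mpr hbij.1) (LinearMap.range_eq_top.mpr hbij.2)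
  let T' : B →L[ℂ] A := e.symm
  refine ⟨T', e.symm_apply_apply, e.apply_symm_apply, ?_⟩
  obtain ⟨c, hc⟩ : ∃ c : ℂ, ‖T'‖ < ‖c‖ := NormedField.exists_lt_norm ℂ _
  have hc0 : c ≠ 0 := norm_pos_iff.mp ((norm_nonneg T').trans_lt hc)
  rw [isWcfHomomorphism_iff] at hT ⊢
  refine (hT.image (-(c * c) • T')).mono ?_
  rintro - ⟨x, hx, y, hy, rfl⟩
  refine ⟨_, ⟨_, T'.inv_smul_apply_mem_ball_one hc hx, _, T'.inv_smul_apply_mem_ball_one hc hy,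
    rfl⟩, ?_⟩
  exact (mulDefect_of_leftInverse_eq_smul T T' e.apply_symm_apply e.symm_apply_apply hc0 x y).symm
end
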